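/- Let n = km > 1 be a spoof odd perfect number with m composite, and let s be the positive integer with s² = k. Then (m+1)/m ≤ 10/9 < 3/√5 < σ(s)/s. -/

import Mathlib

open ArithmeticFunction
open scoped ArithmeticFunction.sigma

/-!
An odd composite `m > 1` is at least `9`, so the spoof equation
`σ(k) / k = 2m / (m + 1)` forces `σ(k) / k ≥ 9 / 5`. Since `σ` is strictly
submultiplicative on squares, `σ(s²) < σ(s)²` for `s > 1` (the divisor `s` of `s²` arises
from both `1 · s` and `s · 1`), so `(σ(s) / s)² > σ(s²) / s² ≥ 9 / 5`.
-/

lemma Nat.nine_le_of_odd_of_not_prime {m : ℕ} (hm : 1 < m) (hodd : Odd m) (hm' : ¬ m.Prime) :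
    9 ≤ m := by
  by_contra! h
  interval_cases m <;> simp_all +decide

lemma Nat.divisors_sq_subset_image_erase {s : ℕ} (hs : 1 < s) :
    (s ^ 2).divisors ⊆
      ((s.divisors ×ˢ s.divisors).erase (1, s)).image fun p => p.1 * p.2 := by
  intro d hd
  have hdvd := Nat.dvd_of_mem_divisors hd
  have hs0 : s ≠ 0 := by omega
  obtain ⟨x, y, hx, hy, rfl⟩ := Nat.dvd_mul.mp (sq s ▸ hdvd)
  simp only [Finset.mem_image, Finset.mem_erase, Finset.mem_product, Nat.mem_divisors, Prod.exists]
  by_cases h : (x, y) = (1, s)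
  · obtain ⟨rfl, rfl⟩ := Prod.mk.inj h
    have hne : (y, 1) ≠ (1, y) := by simp only [ne_eq, Prod.mk.injEq]; omega
    exact ⟨y, 1, ⟨hne, ⟨dvd_rfl, hs0⟩, one_dvd y, hs0⟩, Nat.mul_comm y 1⟩
  · exact ⟨x, y, ⟨h, ⟨hx, hs0⟩, hy, hs0⟩, rfl⟩

lemma sigma_one_sq_lt_sq {s : ℕ} (hs : 1 < s) : σ 1 (s ^ 2) < σ 1 s ^ 2 := by
  have hs0 : s ≠ 0 := by omega
  have h1s : (1, s) ∈ s.divisors ×ˢ s.divisors :=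
    Finset.mk_mem_product (Nat.one_mem_divisors.mpr hs0) (Nat.mem_divisors_self s hs0)
  rw [sigma_one_apply, sigma_one_apply, sq (∑ d ∈ s.divisors, d), Finset.sum_mul_sum,
    ← Finset.sum_product', ← Finset.add_sum_erase _ _ h1s]
  calc ∑ d ∈ (s ^ 2).divisors, d
      ≤ ∑ d ∈ ((s.divisors ×ˢ s.divisors).erase (1, s)).image (fun p => p.1 * p.2), d :=
        Finset.sum_le_sum_of_subset (Nat.divisors_sq_subset_image_erase hs)
    _ ≤ ∑ p ∈ (s.divisors ×ˢ s.divisors).erase (1, s), p.1 * p.2 :=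
        Finset.sum_image_le_of_nonneg fun _ _ => Nat.zero_le _
    _ < 1 * s + ∑ p ∈ (s.divisors ×ˢ s.divisors).erase (1, s), p.1 * p.2 := by omega

lemma three_div_sqrt_five : 3 / √5 = √(9 / 5) := by
  rw [Real.sqrt_div' _ (by norm_num : (0:ℝ) ≤ 5), show (9 : ℝ) = 3 ^ 2 by norm_num,
    Real.sqrt_sq (by norm_num)]

theorem stmt_18_general (k m s : ℕ) (hk : 1 < k) (hm : 1 < m) (hodd : Odd (k * m))
    (hspoof : σ 1 k * (m + 1) = 2 * (k * m)) (hcomp : ¬ m.Prime)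
    (hsq : s ^ 2 = k) :
    ((m : ℝ) + 1) / (m : ℝ) ≤ 10 / 9 ∧ (10 : ℝ) / 9 < 3 / Real.sqrt 5 ∧
      3 / Real.sqrt 5 < (σ 1 s : ℝ) / (s : ℝ) := by
  subst hsq
  have hm9 : 9 ≤ m := Nat.nine_le_of_odd_of_not_prime hm (Nat.odd_mul.mp hodd).2 hcomp
  have hs : 1 < s := (Nat.one_lt_pow_iff two_ne_zero).mp hk
  -- σ(k) / k = 2m / (m + 1) is increasing in m, hence at least 9 / 5.
  have hσk : 9 * s ^ 2 ≤ 5 * σ 1 (s ^ 2) := by nlinarith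
  have hσs : 9 * s ^ 2 < 5 * σ 1 s ^ 2 := by linarith [sigma_one_sq_lt_sq hs]
  have hm9' : (9 : ℝ) ≤ m := by exact_mod_cast hm9
  refine ⟨?_, ?_, ?_⟩
  · rw [div_le_iff₀ (by positivity)]
    linarith
  · rw [three_div_sqrt_five, Real.lt_sqrt (by norm_num)]
    norm_num
  · rw [three_div_sqrt_five, Real.sqrt_lt' (by positivity), div_pow, lt_div_iff₀ (by positivity)]
    have : (9 : ℝ) * s ^ 2 < 5 * σ 1 s ^ 2 := by exact_mod_cast hσs
    linarith

theorem stmt_18 (k m s : ℕ) (hk : 1 < k) (hm : 1 < m) (hodd : Odd (k * m))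
    (hspoof : σ 1 k * (m + 1) = 2 * (k * m)) (hcomp : ¬ m.Prime)
    (hs : 0 < s) (hsq : s ^ 2 = k) :
    ((m : ℝ) + 1) / (m : ℝ) ≤ 10 / 9 ∧ (10 : ℝ) / 9 < 3 / Real.sqrt 5 ∧
      3 / Real.sqrt 5 < (σ 1 s : ℝ) / (s : ℝ) :=
  stmt_18_general k m s hk hm hodd hspoof hcomp hsq
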